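/- arXiv:quant-ph/0301025 — 2 statements merged into one kernel-verified Lean document; each statement's English description precedes it below -/
import Mathlib

section
/- (Proposition 2(ii)) Let k be odd, let X₁, …, X_k ∈ 𝔽₂ⁿ (no independence assumed), and let f : 𝔽₂ⁿ → 𝔽₂ satisfy the majority promise: for every q ∈ 𝔽₂ⁿ, 2·#{i ∈ {1,…,k} : f(q) = q·Xᵢ} ≥ k. Then Σᵢ₌₁ᵏ C_{Xᵢ}(f)² ≥ N²/k, where N = 2ⁿ. -/
/-- The inner product of two vectors in `𝔽₂ⁿ`. -/
def dotp {n : ℕ} (q X : Fin n → ZMod 2) : ZMod 2 := ∑ i, q i * X i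

/-- The Deutsch–Jozsa coefficient `C_j(f) = #{q : j·q = f q} − #{q : j·q ≠ f q}`. -/
def coefC {n : ℕ} (f : (Fin n → ZMod 2) → ZMod 2) (j : Fin n → ZMod 2) : ℤ :=
  ((Finset.univ.filter (fun q : Fin n → ZMod 2 => dotp j q = f q)).card : ℤ) -
  ((Finset.univ.filter (fun q : Fin n → ZMod 2 => dotp j q ≠ f q)).card : ℤ)

/-!
Summing the promise over `i` gives `Σᵢ C_{Xᵢ}(f) = Σ_q (2·#{i : f q = q·Xᵢ} − k)`, and since
`k` is odd each summand is a positive integer, so `Σᵢ C_{Xᵢ}(f) ≥ N`. Cauchy–Schwarz then gives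
`N² ≤ (Σᵢ C_{Xᵢ}(f))² ≤ k · Σᵢ C_{Xᵢ}(f)²`.
-/

open Finset

lemma dotp_comm {n : ℕ} (a b : Fin n → ZMod 2) : dotp a b = dotp b a := by
  simp only [dotp, mul_comm]

lemma Finset.sum_ite_one_neg_one {ι : Type*} (s : Finset ι) (p : ι → Prop) [DecidablePred p] :
    ∑ i ∈ s, (if p i then (1 : ℤ) else -1) = 2 * #(s.filter p) - #s := by
  have hcard : (#(s.filter p) + #(s.filter (¬p ·)) : ℤ) = #s := by
    exact_mod_cast card_filter_add_card_filter_not p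
  rw [sum_ite, sum_const, sum_const, nsmul_eq_mul, nsmul_eq_mul]
  linarith

lemma coefC_eq_sum {n : ℕ} (f : (Fin n → ZMod 2) → ZMod 2) (j : Fin n → ZMod 2) :
    coefC f j = ∑ q, (if dotp j q = f q then (1 : ℤ) else -1) := by
  have hcard : (#(univ.filter fun q => dotp j q = f q) +
      #(univ.filter fun q => dotp j q ≠ f q) : ℤ) = #(univ : Finset (Fin n → ZMod 2)) := by
    exact_mod_cast card_filter_add_card_filter_not _
  rw [sum_ite_one_neg_one, coefC]
  linarith

lemma one_le_sum_ite_one_neg_one_of_odd {ι : Type*} [Fintype ι] (hodd : Odd (Fintype.card ι))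
    (p : ι → Prop) [DecidablePred p] (hmaj : Fintype.card ι ≤ 2 * #(univ.filter p)) :
    1 ≤ ∑ i, (if p i then (1 : ℤ) else -1) := by
  rw [sum_ite_one_neg_one, card_univ]
  have htie : 2 * #(univ.filter p) ≠ Fintype.card ι := fun h =>
    Nat.not_even_iff_odd.mpr hodd ⟨#(univ.filter p), by omega⟩
  omega

lemma two_pow_le_sum_coefC {n k : ℕ} (hk : Odd k) (X : Fin k → (Fin n → ZMod 2))
    (f : (Fin n → ZMod 2) → ZMod 2)
    (hf : ∀ q, k ≤ 2 * #(univ.filter fun i : Fin k => f q = dotp q (X i))) :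
    (2 ^ n : ℤ) ≤ ∑ i, coefC f (X i) := by
  simp_rw [coefC_eq_sum]
  rw [sum_comm]
  calc (2 ^ n : ℤ) = ∑ _q : Fin n → ZMod 2, 1 := by simp
    _ ≤ _ := sum_le_sum fun q _ => by
      refine one_le_sum_ite_one_neg_one_of_odd (by simpa using hk) _ ?_
      simpa only [Fintype.card_fin, dotp_comm q, eq_comm] using hf q

/-- **Proposition 2(ii).** For odd `k`, any `X₁, …, X_k ∈ 𝔽₂ⁿ` (no independence
assumed), and `f` agreeing with the majority of the `q·Xᵢ` for every `q`, one has
`Σᵢ C_{Xᵢ}(f)² ≥ N²/k` with `N = 2ⁿ`. -/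
theorem prop2_ii {n k : ℕ} (hk : Odd k) (X : Fin k → (Fin n → ZMod 2))
    (f : (Fin n → ZMod 2) → ZMod 2)
    (hf : ∀ q, k ≤ 2 * (Finset.univ.filter (fun i : Fin k => f q = dotp q (X i))).card) :
    ∑ i, (coefC f (X i) : ℚ) ^ 2 ≥ ((2 ^ n : ℚ)) ^ 2 / k := by
  have hsum : (2 ^ n : ℚ) ≤ ∑ i, (coefC f (X i) : ℚ) := by
    exact_mod_cast two_pow_le_sum_coefC hk X f hf
  have hcs := sq_sum_le_card_mul_sum_sq (s := univ) (f := fun i : Fin k => (coefC f (X i) : ℚ))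
  rw [card_univ, Fintype.card_fin] at hcs
  rw [ge_iff_le, div_le_iff₀ (by exact_mod_cast hk.pos)]
  calc (2 ^ n : ℚ) ^ 2 ≤ (∑ i, (coefC f (X i) : ℚ)) ^ 2 := by gcongr
    _ ≤ k * ∑ i, (coefC f (X i) : ℚ) ^ 2 := hcs
    _ = (∑ i, (coefC f (X i) : ℚ) ^ 2) * k := mul_comm _ _
end

section
/- (Proposition 2(iii)) Let X₁, X₂, X₃ be pairwise distinct vectors in 𝔽₂ⁿ and let f : 𝔽₂ⁿ → 𝔽₂ satisfy: for every q ∈ 𝔽₂ⁿ, f(q) = q·Xᵢ for at least two indices i ∈ {1, 2, 3}. Then C_{X₁}(f)² + C_{X₂}(f)² + C_{X₃}(f)² ≥ (3/4)·N², where N = 2ⁿ; i.e., the Deutsch–Jozsa algorithm outputs one of X₁, X₂, X₃ with probability at least 3/4. -/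
/-!
Since `f(q)` is the majority value of `q·X₁, q·X₂, q·X₃`, it disagrees with `q·X₃` exactly when
`q·(X₁ - X₂) = 0` and `q·(X₁ - X₃) = 1`. Three distinct points of `𝔽₂ⁿ` are affinely independent,
so `q ↦ (q·(X₁ - X₂), q·(X₁ - X₃))` maps `𝔽₂ⁿ` onto `𝔽₂²` and each of its fibres has `N/4`
elements. Hence `C_{X₃}(f) = N - 2·N/4 = N/2`, likewise for `X₁, X₂`, and the three squares add
up to exactly `3N²/4`.
-/

open Finset Matrix

theorem AddMonoidHom.card_fiber_mul_card_of_surjective {G H F : Type*} [AddGroup G] [Fintype G]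
    [AddMonoid H] [Fintype H] [DecidableEq H] [FunLike F G H] [AddMonoidHomClass F G H]
    (φ : F) (hφ : Function.Surjective φ) (y : H) :
    #{x | φ x = y} * Fintype.card H = Fintype.card G := by
  have hfibers := card_eq_sum_card_fiberwise (f := φ) (s := univ) (t := univ) (by simp)
  rw [sum_congr rfl fun z _ => card_fiber_eq_of_mem_range φ (hφ z) (hφ y), sum_const,
    smul_eq_mul, card_univ, card_univ] at hfibers
  rw [hfibers, mul_comm]

theorem Matrix.mulVec_surjective_of_linearIndependent_row {K m n : Type*} [Field K] [Fintype m]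
    [Fintype n] {M : Matrix m n K} (hM : LinearIndependent K M.row) :
    Function.Surjective M.mulVec :=
  LinearMap.range_eq_top.mp <| Submodule.eq_top_of_finrank_eq <|
    hM.rank_matrix.trans (Module.finrank_fintype_fun_eq_card K).symm

theorem Matrix.card_fiber_mulVec_mul_card_pow_of_linearIndependent_row {K m n : Type*} [Field K]
    [Fintype K] [DecidableEq K] [Fintype m] [Fintype n] [DecidableEq m] [DecidableEq n]
    {M : Matrix m n K} (hM : LinearIndependent K M.row) (y : m → K) :
    #{x | M *ᵥ x = y} * Fintype.card K ^ Fintype.card m = Fintype.card K ^ Fintype.card n := by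
  rw [← Fintype.card_fun, ← Fintype.card_fun]
  exact AddMonoidHom.card_fiber_mul_card_of_surjective M.mulVecLin
    (mulVec_surjective_of_linearIndependent_row hM) y

theorem linearIndependent_pair_zmod_two {V : Type*} [AddCommGroup V] [Module (ZMod 2) V]
    {x y : V} (hx : x ≠ 0) (hy : y ≠ 0) (hxy : x ≠ y) : LinearIndependent (ZMod 2) ![x, y] := by
  rw [LinearIndependent.pair_iff' hx]
  intro a
  obtain rfl | rfl : a = 0 ∨ a = 1 := by decide +revert
  · simpa using hy.symm
  · simpa using hxy

theorem ne_iff_of_majority {α : Type*} {a b c y : α}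
    (hy : (y = a ∧ y = b) ∨ (y = a ∧ y = c) ∨ (y = b ∧ y = c)) : c ≠ y ↔ a = b ∧ a ≠ c := by
  grind

theorem zmod_two_ne_iff_sub_eq_one (a b : ZMod 2) : a ≠ b ↔ a - b = 1 := by
  decide +revert

theorem dotp_eq_dotProduct {n : ℕ} (q X : Fin n → ZMod 2) : dotp q X = X ⬝ᵥ q :=
  dotProduct_comm q X

theorem coefC_eq_sub_two_mul_card_ne {n : ℕ} (f : (Fin n → ZMod 2) → ZMod 2)
    (j : Fin n → ZMod 2) :
    coefC f j = 2 ^ n - 2 * (#{q | dotp j q ≠ f q} : ℤ) := by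
  have hsum : #{q | dotp j q = f q} + #{q | dotp j q ≠ f q} = 2 ^ n := by
    rw [card_filter_add_card_filter_not, card_univ, Fintype.card_fun, ZMod.card, Fintype.card_fin]
  zify at hsum
  rw [coefC]
  linarith

theorem two_mul_coefC_of_majority {n : ℕ} {A B C : Fin n → ZMod 2}
    (hAB : A ≠ B) (hAC : A ≠ C) (hBC : B ≠ C) (f : (Fin n → ZMod 2) → ZMod 2)
    (hf : ∀ q, (f q = dotp q A ∧ f q = dotp q B) ∨ (f q = dotp q A ∧ f q = dotp q C) ∨
      (f q = dotp q B ∧ f q = dotp q C)) :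
    2 * coefC f C = 2 ^ n := by
  set M : Matrix (Fin 2) (Fin n) (ZMod 2) := Matrix.of ![A - B, A - C]
  have hdisagree : ∀ q, dotp C q ≠ f q ↔ M *ᵥ q = ![0, 1] := fun q => by
    rw [show dotp C q = dotp q C from dotProduct_comm C q, ne_iff_of_majority (hf q)]
    simp only [M, cons_mulVec, funext_iff, Fin.forall_fin_two, cons_val_zero, cons_val_one,
      sub_dotProduct, sub_eq_zero, dotp_eq_dotProduct, zmod_two_ne_iff_sub_eq_one]
  have hM : LinearIndependent (ZMod 2) M.row :=
    linearIndependent_pair_zmod_two (sub_ne_zero.mpr hAB) (sub_ne_zero.mpr hAC)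
      (fun h => hBC (sub_right_injective h))
  have hcard : #{q | dotp C q ≠ f q} * 4 = 2 ^ n := by
    simpa [hdisagree] using card_fiber_mulVec_mul_card_pow_of_linearIndependent_row hM ![0, 1]
  rw [coefC_eq_sub_two_mul_card_ne]
  zify at hcard
  linarith

/-- **Proposition 2(iii).** If `X₁, X₂, X₃` are pairwise distinct and `f(q)` agrees with
`q·Xᵢ` for at least two indices `i` for every `q`, then
`C_{X₁}(f)² + C_{X₂}(f)² + C_{X₃}(f)² ≥ (3/4)·N²` with `N = 2ⁿ`; i.e. the algorithm
outputs one of `X₁, X₂, X₃` with probability at least `3/4`. -/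
theorem prop2_iii {n : ℕ} (X₁ X₂ X₃ : Fin n → ZMod 2)
    (h12 : X₁ ≠ X₂) (h13 : X₁ ≠ X₃) (h23 : X₂ ≠ X₃)
    (f : (Fin n → ZMod 2) → ZMod 2)
    (hf : ∀ q, (f q = dotp q X₁ ∧ f q = dotp q X₂) ∨
               (f q = dotp q X₁ ∧ f q = dotp q X₃) ∨
               (f q = dotp q X₂ ∧ f q = dotp q X₃)) :
    (coefC f X₁ : ℚ) ^ 2 + (coefC f X₂ : ℚ) ^ 2 + (coefC f X₃ : ℚ) ^ 2 ≥
      (3 / 4) * ((2 ^ n : ℚ)) ^ 2 := by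
  have h₁ : 2 * coefC f X₁ = 2 ^ n :=
    two_mul_coefC_of_majority h23 h12.symm h13.symm f fun q => by have := hf q; tauto
  have h₂ : 2 * coefC f X₂ = 2 ^ n :=
    two_mul_coefC_of_majority h13 h12 h23.symm f fun q => by have := hf q; tauto
  have h₃ : 2 * coefC f X₃ = 2 ^ n := two_mul_coefC_of_majority h12 h13 h23 f hf
  have hq : ∀ j, 2 * coefC f j = 2 ^ n → (coefC f j : ℚ) = 2 ^ n / 2 := fun j h => by
    rw [eq_div_iff two_ne_zero, mul_comm]
    exact_mod_cast h
  rw [hq _ h₁, hq _ h₂, hq _ h₃]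
  apply ge_of_eq
  ring
end
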